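/- arXiv:math/0311139 — 6 statements merged into one kernel-verified Lean document; each statement's English description precedes it below -/
import Mathlib

section
/- Let r, s be positive integers with s ≤ r, and let m, m' be integers. Then ⌈(m−m')/s⌉ = ⌈(⌈m·r/s⌉ − ⌈m'·r/s⌉)/r⌉. -/
/-- For positive integers `s ≤ r` and integers `m, m'`:
`⌈(m−m')/s⌉ = ⌈(⌈m·r/s⌉ − ⌈m'·r/s⌉)/r⌉`. -/
theorem ceil_identity (r s : ℤ) (hs : 0 < s) (hsr : s ≤ r) (m m' : ℤ) :
    ⌈((m - m' : ℚ)) / s⌉ =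
      ⌈((⌈(m * r : ℚ) / s⌉ - ⌈(m' * r : ℚ) / s⌉ : ℤ) : ℚ) / r⌉ := by
  have hr : 0 < r := lt_of_lt_of_le hs hsr
  have hsQ : (0:ℚ) < (s:ℚ) := by exact_mod_cast hs
  have hrQ : (0:ℚ) < (r:ℚ) := by exact_mod_cast hr
  set k : ℤ := ⌈((m - m' : ℚ)) / s⌉ with hk
  set A : ℤ := ⌈(m * r : ℚ) / s⌉ with hA
  set B : ℤ := ⌈(m' * r : ℚ) / s⌉ with hB
  -- m - m' ≤ k * s
  have h1 : (m : ℚ) - m' ≤ k * s := by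
    have h := Int.ceil_le.mp (le_of_eq hk.symm)
    exact (div_le_iff₀ hsQ).mp h
  -- (k-1)*s < m - m', hence (k-1)*s + 1 ≤ m - m'
  have h2 : ((k:ℚ) - 1) * s + 1 ≤ (m : ℚ) - m' := by
    have hlt : ((k - 1 : ℤ) : ℚ) < ((m - m' : ℚ)) / s :=
      Int.lt_ceil.mp (by rw [← hk]; omega)
    have := (lt_div_iff₀ hsQ).mp hlt
    have hint : ((k-1) * s : ℤ) < m - m' := by exact_mod_cast (by push_cast at this ⊢; linarith : (((k-1)*s : ℤ) : ℚ) < ((m - m' : ℤ) : ℚ))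
    have : (k-1)*s + 1 ≤ m - m' := by omega
    exact_mod_cast this
  -- Upper bound: A ≤ B + k * r
  have hub : A ≤ B + k * r := by
    have : (m * r : ℚ) / s ≤ (m' * r : ℚ) / s + (k * r : ℤ) := by
      rw [div_add' _ _ _ (ne_of_gt hsQ), div_le_div_iff₀ hsQ hsQ]
      push_cast
      have key : ((m:ℚ) - m') * r ≤ (k * s) * r := mul_le_mul_of_nonneg_right h1 hrQ.le
      nlinarith [mul_le_mul_of_nonneg_right key hsQ.le]
    calc A ≤ ⌈(m' * r : ℚ) / s + (k * r : ℤ)⌉ := Int.ceil_le_ceil this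
      _ = B + k * r := Int.ceil_add_intCast _ _
  -- B + 1 ≤ ⌈(m'+1)*r/s⌉
  have hstep : B + 1 ≤ ⌈(((m' : ℚ) + 1) * r) / s⌉ := by
    have : (m' * r : ℚ) / s + (1:ℤ) ≤ ((m' : ℚ) + 1) * r / s := by
      rw [div_add' _ _ _ (ne_of_gt hsQ), div_le_div_iff₀ hsQ hsQ]
      have hsrQ : (s:ℚ) ≤ r := by exact_mod_cast hsr
      push_cast
      nlinarith
    calc B + 1 = ⌈(m' * r : ℚ) / s + (1:ℤ)⌉ := (Int.ceil_add_intCast _ _).symm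
      _ ≤ _ := Int.ceil_le_ceil this
  -- Lower bound: B + (k-1)*r + 1 ≤ A
  have hlb : B + (k - 1) * r + 1 ≤ A := by
    have : ((m' : ℚ) + 1) * r / s + ((k-1) * r : ℤ) ≤ (m * r : ℚ) / s := by
      rw [div_add' _ _ _ (ne_of_gt hsQ), div_le_div_iff₀ hsQ hsQ]
      push_cast
      have key : (((k:ℚ) - 1) * s + 1) * r ≤ ((m:ℚ) - m') * r := mul_le_mul_of_nonneg_right h2 hrQ.le
      nlinarith [mul_le_mul_of_nonneg_right key hsQ.le]
    have h3 : ⌈((m' : ℚ) + 1) * r / s⌉ + (k-1)*r ≤ A := by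
      calc ⌈((m' : ℚ) + 1) * r / s⌉ + (k-1)*r
          = ⌈((m' : ℚ) + 1) * r / s + ((k-1) * r : ℤ)⌉ := (Int.ceil_add_intCast _ _).symm
        _ ≤ A := Int.ceil_le_ceil this
    omega
  -- Conclude
  symm
  rw [Int.ceil_eq_iff]
  constructor
  · rw [lt_div_iff₀ hrQ]
    have : ((B + (k-1)*r + 1 : ℤ) : ℚ) ≤ ((A : ℤ) : ℚ) := by exact_mod_cast hlb
    push_cast at this ⊢
    nlinarith
  · rw [div_le_iff₀ hrQ]
    have : ((A : ℤ) : ℚ) ≤ ((B + k * r : ℤ) : ℚ) := by exact_mod_cast hub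
    push_cast at this ⊢
    nlinarith
end

section
/- Let r, s be positive integers with s ≤ r, and let m, m' be integers. Then 0 ≤ ⌈(m−m')/s⌉·r + ⌈m'·r/s⌉ − (m·r)/s ≤ (1 − 1/s)·r + (1 − 1/s) < r, where the middle expression is a rational number. -/
/-! Clearing the denominator `s`, the two ceilings satisfy `n ≤ s⌈n/s⌉ ≤ n + s - 1`
(the upper bound because `s⌈n/s⌉ - n` is an integer below `s`). Multiplying the bound for
`n = m - m'` by `r ≥ 0` and adding the bound for `n = m'r` squeezes `s` times the middle
expression between `0` and `(s - 1)(r + 1)`, and `(s - 1)(r + 1) < sr` is just `s ≤ r`. -/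

section CeilDiv

variable {K : Type*} [Field K] [LinearOrder K] [IsStrictOrderedRing K] [FloorRing K]

theorem Int.le_mul_ceil_intCast_div {s : ℤ} (hs : 0 < s) (n : ℤ) :
    n ≤ s * ⌈(n : K) / s⌉ := by
  have hsK : (0 : K) < s := by exact_mod_cast hs
  have h : (n : K) ≤ s * ⌈(n : K) / s⌉ := by
    rw [mul_comm, ← div_le_iff₀ hsK]
    exact Int.le_ceil _
  exact_mod_cast h

theorem Int.mul_ceil_intCast_div_le {s : ℤ} (hs : 0 < s) (n : ℤ) :
    s * ⌈(n : K) / s⌉ ≤ n + s - 1 := by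
  have hsK : (0 : K) < s := by exact_mod_cast hs
  have h : (s : K) * ⌈(n : K) / s⌉ < n + s := by
    have := Int.ceil_lt_add_one ((n : K) / s)
    rw [mul_comm, ← lt_div_iff₀ hsK, add_div, div_self hsK.ne']
    exact this
  have : s * ⌈(n : K) / s⌉ < n + s := by exact_mod_cast h
  omega

end CeilDiv

/-- For positive integers `s ≤ r` and integers `m, m'`:
`0 ≤ ⌈(m−m')/s⌉·r + ⌈m'·r/s⌉ − m·r/s ≤ (1 − 1/s)·r + (1 − 1/s) < r` in `ℚ`. -/
theorem ceil_chain_rat (r s : ℤ) (hs : 0 < s) (hsr : s ≤ r) (m m' : ℤ) :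
    0 ≤ ((⌈((m - m' : ℚ)) / s⌉ : ℚ) * r + (⌈(m' * r : ℚ) / s⌉ : ℚ) - (m * r : ℚ) / s) ∧
    ((⌈((m - m' : ℚ)) / s⌉ : ℚ) * r + (⌈(m' * r : ℚ) / s⌉ : ℚ) - (m * r : ℚ) / s)
      ≤ (1 - 1 / (s : ℚ)) * r + (1 - 1 / (s : ℚ)) ∧
    (1 - 1 / (s : ℚ)) * r + (1 - 1 / (s : ℚ)) < (r : ℚ) := by
  have hr : 0 ≤ r := hs.le.trans hsr
  have hsQ : (0 : ℚ) < s := by exact_mod_cast hs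
  set a := ⌈((m - m' : ℚ)) / s⌉
  set b := ⌈(m' * r : ℚ) / s⌉
  have ha_lo := Int.le_mul_ceil_intCast_div (K := ℚ) hs (m - m')
  have ha_hi := Int.mul_ceil_intCast_div_le (K := ℚ) hs (m - m')
  have hb_lo := Int.le_mul_ceil_intCast_div (K := ℚ) hs (m' * r)
  have hb_hi := Int.mul_ceil_intCast_div_le (K := ℚ) hs (m' * r)
  push_cast at ha_lo ha_hi hb_lo hb_hi
  have hlo : m * r ≤ s * (a * r + b) := by nlinarith [mul_le_mul_of_nonneg_right ha_lo hr]
  have hhi : s * (a * r + b) ≤ m * r + (s - 1) * (r + 1) := by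
    nlinarith [mul_le_mul_of_nonneg_right ha_hi hr]
  have hmiddle : (a : ℚ) * r + b - m * r / s = ((s * (a * r + b) - m * r : ℤ) : ℚ) / s := by
    push_cast; field_simp
  have hbound : (1 - 1 / (s : ℚ)) * r + (1 - 1 / (s : ℚ)) = (((s - 1) * (r + 1) : ℤ) : ℚ) / s := by
    push_cast; field_simp
  rw [hmiddle, hbound]
  refine ⟨div_nonneg (by exact_mod_cast sub_nonneg.mpr hlo) hsQ.le,
    div_le_div_of_nonneg_right (by exact_mod_cast sub_le_iff_le_add'.mpr hhi) hsQ.le, ?_⟩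
  rw [div_lt_iff₀ hsQ]
  exact_mod_cast (by nlinarith : (s - 1) * (r + 1) < r * s)
end

section
/- Let r, s be positive integers with s ≤ r and m, m' integers. Then 0 ≤ ⌈(m−m')/s⌉·r + ⌈m'·r/s⌉ − ⌈m·r/s⌉ < r. -/
/-- For positive integers `s ≤ r` and integers `m, m'`:
`0 ≤ ⌈(m−m')/s⌉·r + ⌈m'·r/s⌉ − ⌈m·r/s⌉ < r`. -/
theorem ceil_chain_int (r s : ℤ) (hs : 0 < s) (hsr : s ≤ r) (m m' : ℤ) :
    0 ≤ ⌈((m - m' : ℚ)) / s⌉ * r + ⌈(m' * r : ℚ) / s⌉ - ⌈(m * r : ℚ) / s⌉ ∧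
    ⌈((m - m' : ℚ)) / s⌉ * r + ⌈(m' * r : ℚ) / s⌉ - ⌈(m * r : ℚ) / s⌉ < r := by
  have hsq : (0:ℚ) < (s:ℚ) := by exact_mod_cast hs
  have hsrq : (s:ℚ) ≤ (r:ℚ) := by exact_mod_cast hsr
  have hrq : (0:ℚ) < (r:ℚ) := lt_of_lt_of_le hsq hsrq
  set a := ⌈((m - m' : ℚ)) / s⌉ with ha
  set b := ⌈(m' * r : ℚ) / s⌉ with hb
  set c := ⌈(m * r : ℚ) / s⌉ with hc
  have h1 : ((m - m' : ℚ)) / s ≤ a := Int.le_ceil _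
  have h2 : ((m' * r : ℚ)) / s ≤ b := Int.le_ceil _
  have h5 : (b:ℚ) < ((m' * r : ℚ)) / s + 1 := Int.ceil_lt_add_one _
  have h4 : (a:ℚ) < ((m - m' : ℚ)) / s + 1 := Int.ceil_lt_add_one _
  -- clear denominators
  have h1' : ((m:ℚ) - m') ≤ (a:ℚ) * s := by
    rwa [div_le_iff₀ hsq] at h1
  have h2' : ((m':ℚ) * r) ≤ (b:ℚ) * s := by
    rwa [div_le_iff₀ hsq] at h2
  have h5' : (b:ℚ) * s < (m':ℚ) * r + s := by
    rw [← sub_lt_iff_lt_add'] at h5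
    calc (b:ℚ) * s = ((b:ℚ) - 1) * s + s := by ring
    _ < (m':ℚ) * r + s := by
      have := (lt_div_iff₀ hsq).mp (by linarith : ((b:ℚ) - 1) < (m' * r : ℚ) / s)
      linarith
  -- integer sharpening of h4
  have h4i : a * s ≤ (m - m') + s - 1 := by
    have : (a:ℚ) * s < ((m:ℚ) - m') + s := by
      have := (lt_div_iff₀ hsq).mp (by linarith : ((a:ℚ) - 1) < ((m - m' : ℚ)) / s)
      nlinarith
    have : a * s < (m - m') + s := by exact_mod_cast this
    omega
  have h4q : (a:ℚ) * s ≤ ((m:ℚ) - m') + s - 1 := by exact_mod_cast h4i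
  constructor
  · have lower : c ≤ a * r + b := by
      rw [hc]
      apply Int.ceil_le.mpr
      push_cast
      rw [div_le_iff₀ hsq]
      nlinarith
    linarith
  · have upper : (a - 1) * r + b < c := by
      rw [hc]
      apply Int.lt_ceil.mpr
      push_cast
      rw [lt_div_iff₀ hsq]
      nlinarith
    linarith
end

section
/- Let a_1,…,a_{n+1} be rationals with a_i > 0 for 1 ≤ i ≤ n' and a_i ≤ 0 for i > n', and r_1,…,r_{n+1} positive integers satisfying Σ_{i=1}^{n+1} a_i/r_i ≥ 0. If integers k_i, k'_i satisfy Σ_{i=1}^{n+1} a_i(k_i−k'_i)/r_i > Σ_{i=n''+1}^{n+1} a_i/r_i (where a_i < 0 exactly for n'' < i ≤ n+1), then Σ_{i=1}^{n+1} a_i·⌊(k_i−k'_i)/r_i⌋ > −Σ_{i=1}^{n'} a_i. -/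
open Finset

lemma floor_div_lb (m ri : ℤ) (hri : 0 < ri) :
    ((m : ℚ) - ((ri : ℚ) - 1)) / (ri : ℚ) ≤ (⌊(m : ℚ) / (ri : ℚ)⌋ : ℚ) := by
  have hriQ : (0 : ℚ) < (ri : ℚ) := by exact_mod_cast hri
  rw [div_le_iff₀ hriQ]
  have h1 : (m : ℚ) / (ri : ℚ) - 1 < (⌊(m : ℚ) / (ri : ℚ)⌋ : ℚ) := Int.sub_one_lt_floor _
  have hmc : (m : ℚ) / (ri : ℚ) * (ri : ℚ) = (m : ℚ) := div_mul_cancel₀ _ hriQ.ne'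
  have h2 : (m : ℚ) - (ri : ℚ) < (⌊(m : ℚ) / (ri : ℚ)⌋ : ℚ) * (ri : ℚ) := by
    nlinarith [h1, hmc]
  have h3 : m - ri < ⌊(m : ℚ) / (ri : ℚ)⌋ * ri := by exact_mod_cast h2
  have h4 : m - (ri - 1) ≤ ⌊(m : ℚ) / (ri : ℚ)⌋ * ri := by omega
  exact_mod_cast h4

/-- Flip-case floor inequality on `X`. Indices `i : Fin (n+1)` represent `1,…,n+1`:
`a i > 0` for `i < n'`, `a i ≤ 0` otherwise, with `a i < 0` exactly for `n'' ≤ i`,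
and `Σ a_i/r_i ≥ 0`. If `Σ a_i(k_i−k'_i)/r_i > Σ_{n''≤i} a_i/r_i` then
`Σ a_i·⌊(k_i−k'_i)/r_i⌋ > −Σ_{i<n'} a_i`. -/
theorem flip_floor_bound_X (n n' n'' : ℕ) (hn'n'' : n' ≤ n'') (hn'' : n'' ≤ n + 1)
    (a : Fin (n + 1) → ℚ)
    (hapos : ∀ i : Fin (n + 1), (i : ℕ) < n' → 0 < a i)
    (hanonpos : ∀ i : Fin (n + 1), n' ≤ (i : ℕ) → a i ≤ 0)
    (haneg : ∀ i : Fin (n + 1), (a i < 0 ↔ n'' ≤ (i : ℕ)))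
    (r : Fin (n + 1) → ℤ) (hr : ∀ i, 0 < r i)
    (hsum : 0 ≤ ∑ i, a i / (r i : ℚ))
    (k k' : Fin (n + 1) → ℤ)
    (hlt : (∑ i, a i * ((k i : ℚ) - (k' i : ℚ)) / (r i : ℚ)) >
      ∑ i ∈ univ.filter (fun i : Fin (n + 1) => n'' ≤ (i : ℕ)), a i / (r i : ℚ)) :
    (∑ i, a i * (⌊((k i : ℚ) - (k' i : ℚ)) / (r i : ℚ)⌋ : ℚ)) >
      -(∑ i ∈ univ.filter (fun i : Fin (n + 1) => (i : ℕ) < n'), a i) := by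
  set x : Fin (n + 1) → ℚ := fun i => ((k i : ℚ) - (k' i : ℚ)) / (r i : ℚ) with hxdef
  have hrQ : ∀ i, (0 : ℚ) < (r i : ℚ) := fun i => by exact_mod_cast hr i
  -- pointwise bounds
  have hpb : ∀ i : Fin (n + 1), (i : ℕ) < n' →
      a i * x i - a i + a i / (r i : ℚ) ≤ a i * (⌊x i⌋ : ℚ) := by
    intro i hi
    have hai := hapos i hi
    have hfl : x i - 1 + 1 / (r i : ℚ) ≤ (⌊x i⌋ : ℚ) := by
      have := floor_div_lb (k i - k' i) (r i) (hr i)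
      have hx' : x i = ((k i - k' i : ℤ) : ℚ) / (r i : ℚ) := by
        push_cast [hxdef]; ring
      rw [hx']
      have hne : (r i : ℚ) ≠ 0 := ne_of_gt (hrQ i)
      calc ((k i - k' i : ℤ) : ℚ) / (r i : ℚ) - 1 + 1 / (r i : ℚ)
          = (((k i - k' i : ℤ) : ℚ) - ((r i : ℚ) - 1)) / (r i : ℚ) := by field_simp; ring
        _ ≤ _ := this
    have h5 := mul_le_mul_of_nonneg_left hfl (le_of_lt hai)
    calc a i * x i - a i + a i / (r i : ℚ) = a i * (x i - 1 + 1 / (r i : ℚ)) := by ring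
      _ ≤ a i * (⌊x i⌋ : ℚ) := h5
  have hnb : ∀ i : Fin (n + 1), ¬ ((i : ℕ) < n') →
      a i * x i ≤ a i * (⌊x i⌋ : ℚ) := by
    intro i hi
    exact mul_le_mul_of_nonpos_left (Int.floor_le _) (hanonpos i (le_of_not_gt hi))
  -- zero in the middle
  have hzero : ∀ i : Fin (n + 1), n' ≤ (i : ℕ) → (i : ℕ) < n'' → a i = 0 := by
    intro i h1 h2
    have := hanonpos i h1
    have hne : ¬ a i < 0 := by rw [haneg i]; omega
    linarith [lt_or_eq_of_le this, not_lt.mp hne]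
  -- sum of a/r over i<n'' equals over i<n'
  have hsumeq : ∑ i ∈ univ.filter (fun i : Fin (n + 1) => (i : ℕ) < n''), a i / (r i : ℚ)
      = ∑ i ∈ univ.filter (fun i : Fin (n + 1) => (i : ℕ) < n'), a i / (r i : ℚ) := by
    refine (Finset.sum_subset ?_ ?_).symm
    · intro i hi
      simp only [mem_filter, mem_univ, true_and] at hi ⊢
      omega
    · intro i hi hni
      simp only [mem_filter, mem_univ, true_and] at hi hni
      rw [hzero i (by omega) hi]
      simp
  -- split hsum
  have hsplit : (∑ i, a i / (r i : ℚ)) =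
      (∑ i ∈ univ.filter (fun i : Fin (n + 1) => (i : ℕ) < n''), a i / (r i : ℚ)) +
      (∑ i ∈ univ.filter (fun i : Fin (n + 1) => n'' ≤ (i : ℕ)), a i / (r i : ℚ)) := by
    rw [← Finset.sum_filter_add_sum_filter_not univ (fun i : Fin (n + 1) => (i : ℕ) < n'')]
    congr 1
    apply Finset.sum_congr _ (fun _ _ => rfl)
    simp [not_lt]
  have hkey : (∑ i, a i * x i) >
      -(∑ i ∈ univ.filter (fun i : Fin (n + 1) => (i : ℕ) < n'), a i / (r i : ℚ)) := by
    have h1 : (∑ i, a i * x i) = ∑ i, a i * ((k i : ℚ) - (k' i : ℚ)) / (r i : ℚ) := by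
      apply Finset.sum_congr rfl
      intro i _
      rw [hxdef]; ring
    rw [h1]
    have h2 : ∑ i ∈ univ.filter (fun i : Fin (n + 1) => n'' ≤ (i : ℕ)), a i / (r i : ℚ) ≥
        -(∑ i ∈ univ.filter (fun i : Fin (n + 1) => (i : ℕ) < n'), a i / (r i : ℚ)) := by
      rw [← hsumeq]; linarith [hsplit ▸ hsum]
    linarith
  -- main chain
  have hmain : (∑ i, a i * (⌊x i⌋ : ℚ)) ≥
      (∑ i, a i * x i)
      - (∑ i ∈ univ.filter (fun i : Fin (n + 1) => (i : ℕ) < n'), a i)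
      + (∑ i ∈ univ.filter (fun i : Fin (n + 1) => (i : ℕ) < n'), a i / (r i : ℚ)) := by
    rw [← Finset.sum_filter_add_sum_filter_not univ (fun i : Fin (n + 1) => (i : ℕ) < n')
      (fun i => a i * (⌊x i⌋ : ℚ)),
      ← Finset.sum_filter_add_sum_filter_not univ (fun i : Fin (n + 1) => (i : ℕ) < n')
      (fun i => a i * x i)]
    have A : ∑ i ∈ univ.filter (fun i : Fin (n + 1) => (i : ℕ) < n'), a i * (⌊x i⌋ : ℚ) ≥
        ∑ i ∈ univ.filter (fun i : Fin (n + 1) => (i : ℕ) < n'),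
          (a i * x i - a i + a i / (r i : ℚ)) := by
      apply Finset.sum_le_sum
      intro i hi
      simp only [mem_filter, mem_univ, true_and] at hi
      exact hpb i hi
    have B : ∑ i ∈ univ.filter (fun i : Fin (n + 1) => ¬ (i : ℕ) < n'), a i * (⌊x i⌋ : ℚ) ≥
        ∑ i ∈ univ.filter (fun i : Fin (n + 1) => ¬ (i : ℕ) < n'), a i * x i := by
      apply Finset.sum_le_sum
      intro i hi
      simp only [mem_filter, mem_univ, true_and] at hi
      exact hnb i hi
    have C : ∑ i ∈ univ.filter (fun i : Fin (n + 1) => (i : ℕ) < n'),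
          (a i * x i - a i + a i / (r i : ℚ)) =
        (∑ i ∈ univ.filter (fun i : Fin (n + 1) => (i : ℕ) < n'), a i * x i)
        - (∑ i ∈ univ.filter (fun i : Fin (n + 1) => (i : ℕ) < n'), a i)
        + (∑ i ∈ univ.filter (fun i : Fin (n + 1) => (i : ℕ) < n'), a i / (r i : ℚ)) := by
      rw [Finset.sum_add_distrib, Finset.sum_sub_distrib]
    linarith [C ▸ A, B]
  calc (∑ i, a i * (⌊x i⌋ : ℚ))
      ≥ (∑ i, a i * x i)
        - (∑ i ∈ univ.filter (fun i : Fin (n + 1) => (i : ℕ) < n'), a i)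
        + (∑ i ∈ univ.filter (fun i : Fin (n + 1) => (i : ℕ) < n'), a i / (r i : ℚ)) := hmain
    _ > -(∑ i ∈ univ.filter (fun i : Fin (n + 1) => (i : ℕ) < n'), a i) := by linarith [hkey]
end

section
/- Let a_1,…,a_n be real numbers with a_i > 0 for 1 ≤ i ≤ n', a_i = 0 for n' < i ≤ n'', a_i < 0 for n'' < i ≤ n, set a_{n+1} = −1, and suppose Σ_{i=1}^{n+1} a_i v_i = 0 where v_{n+1} = (a_1,…,a_n) and v_1,…,v_n is the standard basis of ℝⁿ. Let σ_{i_0} be the cone generated by {v_i : 1 ≤ i ≤ n+1, i ≠ i_0}. Then the cone generated by v_1,…,v_{n+1} equals both ∪_{i=1}^{n'} σ_i and ∪_{i=n''+1}^{n+1} σ_i. -/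
/-! Any linear relation `∑ A i • v i = 0` splits the cone of `v` into the cones `σ_{i₀}` obtained
by dropping one generator `v i₀` with `A i₀ > 0`, provided `A ≤ 0` off those indices: subtracting
`t • A` from the coefficients of a point, with `t` the least ratio `c i / A i` over the positive
indices, keeps them nonnegative and kills the coefficient at the minimizing index. The two
decompositions of the flip come from the relation `∑ A i • v i = 0` and its negative. -/

open Finset

def coneGen {n : ℕ} {ι : Type*} [Fintype ι] (w : ι → (Fin n → ℝ)) :
    Set (Fin n → ℝ) :=
  {x | ∃ c : ι → ℝ, (∀ i, 0 ≤ c i) ∧ x = ∑ i, c i • w i}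

section ConeGen

variable {n : ℕ} {ι : Type*} [Fintype ι] [DecidableEq ι] (v : ι → (Fin n → ℝ))

theorem mem_coneGen_subtype_ne_iff (i₀ : ι) (x : Fin n → ℝ) :
    x ∈ coneGen (fun j : {j // j ≠ i₀} => v j.1) ↔
      ∃ c : ι → ℝ, (∀ i, 0 ≤ c i) ∧ c i₀ = 0 ∧ x = ∑ i, c i • v i := by
  constructor
  · rintro ⟨c, hc, rfl⟩
    refine ⟨fun i => if h : i = i₀ then 0 else c ⟨i, h⟩, fun i => ?_, by simp, ?_⟩
    · dsimp only
      split_ifs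
      exacts [le_rfl, hc _]
    · rw [Fintype.sum_eq_add_sum_subtype_ne _ i₀]
      simp only [dite_true, zero_smul, zero_add]
      exact Fintype.sum_congr _ _ fun j => by simp [j.2]
  · rintro ⟨c, hc, hc₀, rfl⟩
    refine ⟨fun j => c j.1, fun j => hc j.1, ?_⟩
    rw [Fintype.sum_eq_add_sum_subtype_ne _ i₀, hc₀, zero_smul, zero_add]

theorem coneGen_subtype_ne_subset (i₀ : ι) :
    coneGen (fun j : {j // j ≠ i₀} => v j.1) ⊆ coneGen v := by
  intro x hx
  obtain ⟨c, hc, -, rfl⟩ := (mem_coneGen_subtype_ne_iff v i₀ x).1 hx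
  exact ⟨c, hc, rfl⟩

theorem exists_mem_coneGen_subtype_ne_of_sum_smul_eq_zero (A : ι → ℝ)
    (hA : ∑ i, A i • v i = 0) (S : Set ι) (hS : S.Nonempty) (hpos : ∀ i ∈ S, 0 < A i)
    (hnonpos : ∀ i ∉ S, A i ≤ 0) {x : Fin n → ℝ} (hx : x ∈ coneGen v) :
    ∃ i₀ ∈ S, x ∈ coneGen (fun j : {j // j ≠ i₀} => v j.1) := by
  obtain ⟨c, hc, rfl⟩ := hx
  obtain ⟨i₀, hi₀, hmin⟩ := S.exists_min_image (fun i => c i / A i) S.toFinite hS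
  set t := c i₀ / A i₀
  have ht : 0 ≤ t := div_nonneg (hc i₀) (hpos i₀ hi₀).le
  refine ⟨i₀, hi₀, (mem_coneGen_subtype_ne_iff v i₀ _).2
    ⟨fun i => c i - t * A i, fun i => sub_nonneg.2 ?_, ?_, ?_⟩⟩
  · by_cases hi : i ∈ S
    · exact (le_div_iff₀ (hpos i hi)).1 (hmin i hi)
    · exact (mul_nonpos_of_nonneg_of_nonpos ht (hnonpos i hi)).trans (hc i)
  · simp [t, div_mul_cancel₀ _ (hpos i₀ hi₀).ne']
  · simp only [sub_smul, sum_sub_distrib, mul_smul, ← smul_sum, hA, smul_zero, sub_zero]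

theorem coneGen_eq_biUnion_of_sum_smul_eq_zero (A : ι → ℝ) (hA : ∑ i, A i • v i = 0)
    (S : Set ι) (hS : S.Nonempty) (hpos : ∀ i ∈ S, 0 < A i) (hnonpos : ∀ i ∉ S, A i ≤ 0) :
    coneGen v = ⋃ i₀ ∈ S, coneGen (fun j : {j // j ≠ i₀} => v j.1) := by
  refine (Set.iUnion₂_subset fun i₀ _ => coneGen_subtype_ne_subset v i₀).antisymm' fun x hx => ?_
  obtain ⟨i₀, hi₀, hx⟩ :=
    exists_mem_coneGen_subtype_ne_of_sum_smul_eq_zero v A hA S hS hpos hnonpos hx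
  exact Set.mem_biUnion hi₀ hx

end ConeGen

theorem fan_decompositions_flip_general (n n' n'' : ℕ) (hn' : 2 ≤ n')
    (hn''n : n'' < n)
    (A : Fin (n + 1) → ℝ)
    (hapos : ∀ i : Fin (n + 1), (i : ℕ) < n' → 0 < A i)
    (hazero : ∀ i : Fin (n + 1), n' ≤ (i : ℕ) → (i : ℕ) < n'' → A i = 0)
    (haneg : ∀ i : Fin (n + 1), n'' ≤ (i : ℕ) → (i : ℕ) < n → A i < 0)
    (halast : A (Fin.last n) = -1)
    (v : Fin (n + 1) → (Fin n → ℝ))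
    (hsum : ∑ i, A i • v i = 0) :
    (coneGen v =
      ⋃ i₀ ∈ {i₀ : Fin (n + 1) | (i₀ : ℕ) < n'},
        coneGen (fun j : {j : Fin (n + 1) // j ≠ i₀} => v j.1)) ∧
    coneGen v =
      ⋃ i₀ ∈ {i₀ : Fin (n + 1) | n'' ≤ (i₀ : ℕ)},
        coneGen (fun j : {j : Fin (n + 1) // j ≠ i₀} => v j.1) := by
  have hA_neg_of_le : ∀ i : Fin (n + 1), n'' ≤ (i : ℕ) → A i < 0 := by
    intro i hi
    rcases (Nat.lt_succ_iff.1 i.isLt).lt_or_eq with hin | hin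
    · exact haneg i hi hin
    · rw [show i = Fin.last n from Fin.ext hin, halast]
      norm_num
  have hA_nonneg_of_lt : ∀ i : Fin (n + 1), (i : ℕ) < n'' → 0 ≤ A i := by
    intro i hi
    by_cases hin' : (i : ℕ) < n'
    · exact (hapos i hin').le
    · exact (hazero i (not_lt.1 hin') hi).ge
  constructor
  · refine coneGen_eq_biUnion_of_sum_smul_eq_zero v A hsum _ ⟨0, show 0 < n' by omega⟩ hapos ?_
    intro i hi
    by_cases hin'' : (i : ℕ) < n''
    · exact (hazero i (not_lt.1 hi) hin'').le
    · exact (hA_neg_of_le i (not_lt.1 hin'')).le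
  · have hsum_neg : ∑ i, (-A i) • v i = 0 := by simp [hsum]
    refine coneGen_eq_biUnion_of_sum_smul_eq_zero v (fun i => -A i) hsum_neg _
      ⟨Fin.last n, hn''n.le⟩ (fun i hi => neg_pos.2 (hA_neg_of_le i hi)) ?_
    exact fun i hi => neg_nonpos.2 (hA_nonneg_of_lt i (not_le.1 hi))

/-- The two fan decompositions of the flip: with `v_1,…,v_n` the standard basis,
`v_{n+1} = (a_1,…,a_n)` where `a_i > 0` for `i ≤ n'`, `a_i = 0` for `n' < i ≤ n''`,
`a_i < 0` for `n'' < i ≤ n`, `a_{n+1} = −1`, and `Σ_{i=1}^{n+1} a_i v_i = 0`,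
the cone generated by `v_1,…,v_{n+1}` equals both `⋃_{i=1}^{n'} σ_i` and
`⋃_{i=n''+1}^{n+1} σ_i`, where `σ_{i_0}` is generated by the `v_i` with `i ≠ i_0`.
Indices `i : Fin (n+1)` represent `1,…,n+1`, and `A i` denotes `a_i`. -/
theorem fan_decompositions_flip (n n' n'' : ℕ) (hn' : 2 ≤ n') (hn'n'' : n' ≤ n'')
    (hn''n : n'' < n)
    (A : Fin (n + 1) → ℝ)
    (hapos : ∀ i : Fin (n + 1), (i : ℕ) < n' → 0 < A i)
    (hazero : ∀ i : Fin (n + 1), n' ≤ (i : ℕ) → (i : ℕ) < n'' → A i = 0)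
    (haneg : ∀ i : Fin (n + 1), n'' ≤ (i : ℕ) → (i : ℕ) < n → A i < 0)
    (halast : A (Fin.last n) = -1)
    (v : Fin (n + 1) → (Fin n → ℝ))
    (hv : ∀ i : Fin (n + 1), ∀ h : (i : ℕ) < n, v i = Pi.single (⟨i, h⟩ : Fin n) 1)
    (hvlast : ∀ j : Fin n, v (Fin.last n) j = A (Fin.castSucc j))
    (hsum : ∑ i, A i • v i = 0) :
    (coneGen v =
      ⋃ i₀ ∈ {i₀ : Fin (n + 1) | (i₀ : ℕ) < n'},
        coneGen (fun j : {j : Fin (n + 1) // j ≠ i₀} => v j.1)) ∧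
    coneGen v =
      ⋃ i₀ ∈ {i₀ : Fin (n + 1) | n'' ≤ (i₀ : ℕ)},
        coneGen (fun j : {j : Fin (n + 1) // j ≠ i₀} => v j.1) :=
  fan_decompositions_flip_general n n' n'' hn' hn''n A hapos hazero haneg halast v hsum
end

section
/- Let n ≥ 1 and let a_1,…,a_n be positive rationals, r_1,…,r_{n+1} positive integers, a_{n+1} = −1. Suppose Σ_{i=1}^n a_i/r_i ≤ 1/r_{n+1}. Let k_i, k'_i (1 ≤ i ≤ n+1) be integers with 0 ≤ −Σ_{i=1}^{n+1} a_i k_i/r_i < Σ_{i=1}^n a_i/r_i and the same for k'_i. If −Σ_{i=1}^{n+1} a_i(k_i−k'_i)/r_i < Σ_{i=1}^n a_i/r_i, then −Σ_{i=1}^{n+1} a_i·⌊(k_i−k'_i)/r_i⌋ < Σ_{i=1}^n a_i. -/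
open Finset

lemma aux_floor (m r : ℤ) (hr : 0 < r) :
    (m : ℚ) / r - ((r : ℚ) - 1) / r ≤ (⌊(m : ℚ) / (r : ℚ)⌋ : ℚ) := by
  have h1 : ⌊(m : ℚ) / (r : ℚ)⌋ = m / r := by
    have := Rat.floor_intCast_div_natCast m r.toNat
    have hcast : ((r.toNat : ℕ) : ℚ) = (r : ℚ) := by exact_mod_cast Int.toNat_of_nonneg hr.le
    rwa [hcast, Int.toNat_of_nonneg hr.le] at this
  have h2 : m - r + 1 ≤ r * (m / r) := by
    have hmod : m % r < r := Int.emod_lt_of_pos m hr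
    have := Int.emod_add_mul_ediv m r
    omega
  rw [h1, div_sub_div_same, div_le_iff₀ (by exact_mod_cast hr)]
  have : ((m - r + 1 : ℤ) : ℚ) ≤ ((r * (m / r) : ℤ) : ℚ) := by exact_mod_cast h2
  push_cast at this
  linarith

/-- Case (4) of the toroidal theorem. With positive rationals `a i` (`i = 1,…,n`,
represented by `i : Fin n`), `a_{n+1} = −1`, positive integers `r i` and `rN = r_{n+1}`,
and `Σ_{i=1}^n a_i/r_i ≤ 1/r_{n+1}`: if the integers `k`, `k'` both lie in the range
`0 ≤ −Σ_{i=1}^{n+1} a_i k_i/r_i < Σ_{i=1}^n a_i/r_i`, and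
`−Σ_{i=1}^{n+1} a_i(k_i−k'_i)/r_i < Σ_{i=1}^n a_i/r_i`, then
`−Σ_{i=1}^{n+1} a_i·⌊(k_i−k'_i)/r_i⌋ < Σ_{i=1}^n a_i`. -/
theorem inverse_contraction_floor_bound (n : ℕ) (hn : 1 ≤ n)
    (a : Fin n → ℚ) (ha : ∀ i, 0 < a i)
    (r : Fin n → ℤ) (hr : ∀ i, 0 < r i) (rN : ℤ) (hrN : 0 < rN)
    (hsum : ∑ i, a i / (r i : ℚ) ≤ 1 / (rN : ℚ))
    (k k' : Fin n → ℤ) (kN k'N : ℤ)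
    (hk : 0 ≤ -((∑ i, a i * (k i : ℚ) / (r i : ℚ)) + (-1) * (kN : ℚ) / (rN : ℚ)) ∧
      -((∑ i, a i * (k i : ℚ) / (r i : ℚ)) + (-1) * (kN : ℚ) / (rN : ℚ)) <
        ∑ i, a i / (r i : ℚ))
    (hk' : 0 ≤ -((∑ i, a i * (k' i : ℚ) / (r i : ℚ)) + (-1) * (k'N : ℚ) / (rN : ℚ)) ∧
      -((∑ i, a i * (k' i : ℚ) / (r i : ℚ)) + (-1) * (k'N : ℚ) / (rN : ℚ)) <
        ∑ i, a i / (r i : ℚ))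
    (hlt : -((∑ i, a i * ((k i : ℚ) - (k' i : ℚ)) / (r i : ℚ)) +
        (-1) * ((kN : ℚ) - (k'N : ℚ)) / (rN : ℚ)) < ∑ i, a i / (r i : ℚ)) :
    -((∑ i, a i * (⌊((k i : ℚ) - (k' i : ℚ)) / (r i : ℚ)⌋ : ℚ)) +
        (-1) * (⌊((kN : ℚ) - (k'N : ℚ)) / (rN : ℚ)⌋ : ℚ)) < ∑ i, a i := by
  have hri : ∀ i, ((r i : ℚ)) ≠ 0 := fun i => by exact_mod_cast (hr i).ne'
  have hstep : ∀ i ∈ Finset.univ (α := Fin n),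
      a i * ((k i : ℚ) - (k' i : ℚ)) / (r i : ℚ) - a i + a i / (r i : ℚ) ≤
        a i * (⌊((k i : ℚ) - (k' i : ℚ)) / (r i : ℚ)⌋ : ℚ) := by
    intro i _
    have hb := aux_floor (k i - k' i) (r i) (hr i)
    push_cast at hb
    have hmul := mul_le_mul_of_nonneg_left hb (ha i).le
    have key : a i * (((k i : ℚ) - (k' i : ℚ)) / (r i : ℚ) - ((r i : ℚ) - 1) / (r i : ℚ)) =
        a i * ((k i : ℚ) - (k' i : ℚ)) / (r i : ℚ) - a i + a i / (r i : ℚ) := by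
      have h0 := hri i
      field_simp
      ring
    linarith [hmul, key.ge]
  have hsum2 := Finset.sum_le_sum hstep
  rw [Finset.sum_add_distrib, Finset.sum_sub_distrib] at hsum2
  have hN : (⌊((kN : ℚ) - (k'N : ℚ)) / (rN : ℚ)⌋ : ℚ) ≤ ((kN : ℚ) - (k'N : ℚ)) / (rN : ℚ) :=
    Int.floor_le _
  have e1 : (-1 : ℚ) * ((kN : ℚ) - (k'N : ℚ)) / (rN : ℚ) = -(((kN : ℚ) - (k'N : ℚ)) / (rN : ℚ)) := by
    ring
  have e2 : (-1 : ℚ) * (⌊((kN : ℚ) - (k'N : ℚ)) / (rN : ℚ)⌋ : ℚ) =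
      -((⌊((kN : ℚ) - (k'N : ℚ)) / (rN : ℚ)⌋ : ℚ)) := by ring
  rw [e1] at hlt
  rw [e2]
  linarith [hlt, hsum2, hN]
end
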